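/- Let H be a connected directed acyclic graph and f : 𝔓(H) → 𝔓(G) a map of properads between the free properads generated by H and G. Suppose f has a vertex lift f̃ : 𝚟(H) → 𝚟(G) (i.e., f sends each generator of 𝔓(H) corresponding to a vertex of H to a generator of 𝔓(G) corresponding to a vertex of G) which is injective. If e₁ ≠ e₂ are edges of H with f(e₁) = f(e₂) (as colors), then (e₁, e₂) ∈ in(H) × out(H) or (e₂, e₁) ∈ in(H) × out(H). -/
import Mathlib


/-!
STATEMENT 18: Let `H` be a connected directed acyclic graph and `f : 𝔓(H) → 𝔓(G)` a map
of properads between the free properads generated by `H` and `G`.  Suppose `f` has a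
vertex lift `f̃ : 𝚟(H) → 𝚟(G)` which is injective.  If `e₁ ≠ e₂` are edges of `H` with
`f(e₁) = f(e₂)` (as colors), then `(e₁, e₂) ∈ in(H) × out(H)` or
`(e₂, e₁) ∈ in(H) × out(H)`.

(`e ∈ in(H)` means `H.src e = none`, i.e. `e` is the output of no vertex; `e ∈ out(H)`
means `H.tgt e = none`.)
-/

/-- A directed graph with loose ends: each edge has at most one source vertex (`src`,
the vertex having it as an output; `none` means the edge is an input of the graph) and
at most one target vertex (`tgt`, the vertex having it as an input; `none` means the
edge is an output of the graph). -/
structure DGraph where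
  E : Type
  V : Type
  src : E → Option V
  tgt : E → Option V

namespace DGraph

variable (G : DGraph)

/-- Undirected incidence between edges and vertices. -/
def step : (G.E ⊕ G.V) → (G.E ⊕ G.V) → Prop
  | Sum.inl e, Sum.inr v => G.src e = some v ∨ G.tgt e = some v
  | Sum.inr v, Sum.inl e => G.src e = some v ∨ G.tgt e = some v
  | _, _ => False

/-- `G` is connected as an undirected graph. -/
def ConnectedG : Prop :=
  Nonempty (G.E ⊕ G.V) ∧ ∀ x y : G.E ⊕ G.V, Relation.ReflTransGen G.step x y

/-- `G` is acyclic: it has no directed cycles. -/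
def Acyclic : Prop :=
  ∀ v : G.V, ¬ Relation.TransGen
    (fun a b : G.V => ∃ e, G.src e = some a ∧ G.tgt e = some b) v v

/-- An (ordinary) subgraph of `G`: a set of edges and a set of vertices, with the
inherited incidence data. -/
structure Sub where
  SE : Set G.E
  SV : Set G.V

variable {G}

/-- Membership of an edge or a vertex in a subgraph. -/
def Sub.Mem (S : Sub G) : G.E ⊕ G.V → Prop
  | Sum.inl e => e ∈ S.SE
  | Sum.inr v => v ∈ S.SV

/-- Inclusion of subgraphs. -/
def Sub.le (S T : Sub G) : Prop := S.SE ⊆ T.SE ∧ S.SV ⊆ T.SV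

/-- The union `S ∪̇ T` of two subgraphs. -/
def Sub.union (S T : Sub G) : Sub G := ⟨S.SE ∪ T.SE, S.SV ∪ T.SV⟩

/-- The maximal subgraph of `G`. -/
def top (G : DGraph) : Sub G := ⟨Set.univ, Set.univ⟩

/-- `S` is an open subgraph of the subgraph `A`: every edge of `A` incident to a vertex
of `S` belongs to `S`. -/
def Sub.OpenIn (A S : Sub G) : Prop :=
  ∀ v ∈ S.SV, ∀ e ∈ A.SE, (G.src e = some v ∨ G.tgt e = some v) → e ∈ S.SE

/-- `S` is connected: it is nonempty and any two of its edges/vertices are joined by a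
zig-zag of incidences inside `S`. -/
def Sub.Connected (S : Sub G) : Prop :=
  (∃ x, S.Mem x) ∧ ∀ x y, S.Mem x → S.Mem y →
    Relation.ReflTransGen (fun a b => G.step a b ∧ S.Mem a ∧ S.Mem b) x y

/-- One step of a directed path: from an edge to its target vertex, or from a vertex to
an edge sourced at it. -/
def dstep : (G.E ⊕ G.V) → (G.E ⊕ G.V) → Prop
  | Sum.inl e, Sum.inr v => G.tgt e = some v
  | Sum.inr v, Sum.inl e => G.src e = some v
  | _, _ => False

/-- `S` is convex in the subgraph `A`: every directed path of `A` (an alternating list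
of edges and vertices) which starts and ends at an edge of `S` lies entirely in `S`.
(This is Kock's lifting-property characterization of structured subgraphs.) -/
def Sub.ConvexIn (A S : Sub G) : Prop :=
  ∀ l : List (G.E ⊕ G.V), l.Chain' dstep → (∀ x ∈ l, A.Mem x) →
    (∀ x, l.head? = some x → ∃ e, x = Sum.inl e ∧ e ∈ S.SE) →
    (∀ x, l.getLast? = some x → ∃ e, x = Sum.inl e ∧ e ∈ S.SE) →
    ∀ x ∈ l, S.Mem x

/-- `S` is a structured subgraph of the subgraph `A`: it is contained in `A`, open in
`A`, connected, and convex in `A`. -/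
def Sub.StructuredIn (A S : Sub G) : Prop :=
  S.le A ∧ S.OpenIn A ∧ S.Connected ∧ S.ConvexIn A

/-- `S` is a structured subgraph of `G`. -/
def Sub.Structured (S : Sub G) : Prop := S.StructuredIn (top G)

/-- The set `in(S)` of input edges of a subgraph: edges of `S` which are not the output
of any vertex of `S`. -/
def Sub.inSet (S : Sub G) : Set G.E :=
  {e | e ∈ S.SE ∧ ∀ v ∈ S.SV, G.src e ≠ some v}

/-- The set `out(S)` of output edges of a subgraph: edges of `S` which are not the input
of any vertex of `S`. -/
def Sub.outSet (S : Sub G) : Set G.E :=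
  {e | e ∈ S.SE ∧ ∀ v ∈ S.SV, G.tgt e ≠ some v}

end DGraph

/-- The data of a map of free properads `𝔓(H) → 𝔓(G)` together with a vertex lift: a
color (edge) map `fE`, a vertex map `fV` taking each vertex generator of `𝔓(H)` to a
vertex generator of `𝔓(G)`, such that `fE` restricts to bijections
`in(v) ≅ in(fV v)` and `out(v) ≅ out(fV v)` for every vertex `v` (the generator `fV v`
has the same profile as the image of the generator `v`). -/
structure VLMap (H G : DGraph) where
  fE : H.E → G.E
  fV : H.V → G.V
  bij_in : ∀ v : H.V, Set.BijOn fE {e | H.tgt e = some v} {e | G.tgt e = some (fV v)}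
  bij_out : ∀ v : H.V, Set.BijOn fE {e | H.src e = some v} {e | G.src e = some (fV v)}

open DGraph in
theorem stmt18 (H G : DGraph) [Finite H.E] [Finite H.V] [Finite G.E] [Finite G.V]
    (hc : H.ConnectedG) (ha : H.Acyclic)
    (f : VLMap H G) (hinj : Function.Injective f.fV)
    (e₁ e₂ : H.E) (hne : e₁ ≠ e₂) (heq : f.fE e₁ = f.fE e₂) :
    (H.src e₁ = none ∧ H.tgt e₂ = none) ∨ (H.src e₂ = none ∧ H.tgt e₁ = none) := by
  have hsrc : H.src e₁ = none ∨ H.src e₂ = none := by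
    rcases h1 : H.src e₁ with _ | v
    · exact Or.inl rfl
    rcases h2 : H.src e₂ with _ | w
    · exact Or.inr rfl
    exfalso
    have hv : G.src (f.fE e₁) = some (f.fV v) := (f.bij_out v).mapsTo h1
    have hw : G.src (f.fE e₂) = some (f.fV w) := (f.bij_out w).mapsTo h2
    rw [heq, hw] at hv
    have hvw := hinj (Option.some.inj hv).symm
    subst hvw
    exact hne ((f.bij_out v).injOn h1 h2 heq)
  have htgt : H.tgt e₁ = none ∨ H.tgt e₂ = none := by
    rcases h1 : H.tgt e₁ with _ | v
    · exact Or.inl rfl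
    rcases h2 : H.tgt e₂ with _ | w
    · exact Or.inr rfl
    exfalso
    have hv : G.tgt (f.fE e₁) = some (f.fV v) := (f.bij_in v).mapsTo h1
    have hw : G.tgt (f.fE e₂) = some (f.fV w) := (f.bij_in w).mapsTo h2
    rw [heq, hw] at hv
    have hvw := hinj (Option.some.inj hv).symm
    subst hvw
    exact hne ((f.bij_in v).injOn h1 h2 heq)
  have isolated : ∀ e e' : H.E, e ≠ e' → H.src e = none → H.tgt e = none → False := by
    intro e e' hne' hs ht
    rcases (hc.2 (Sum.inl e) (Sum.inl e')).cases_head with h | ⟨z, hz, _⟩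
    · exact hne' (Sum.inl.inj h)
    · cases z with
      | inl e'' => exact hz.elim
      | inr v => rcases hz with h | h <;> simp_all
  rcases hsrc with hs | hs <;> rcases htgt with ht | ht
  · exact absurd (isolated e₁ e₂ hne hs ht) not_false
  · exact Or.inl ⟨hs, ht⟩
  · exact Or.inr ⟨hs, ht⟩
  · exact absurd (isolated e₂ e₁ hne.symm hs ht) not_false
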